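/- Let N ≥ 2 be an integer and L > 0. The following are equivalent: (i) there exist λ ∈ ℂ and functions φ₁, …, φ_N : ℝ → ℂ, not all identically zero on [0,L], each satisfying the KdV spectral ODE with parameter λ on [0,L], with the boundary conditions φ_j(0) = φ₁(0) for all j, Σ_{j=1}^N φ_j''(0) = 0, and φ_j(L) = 0, φ_j'(0) = 0, φ_j''(L) = 0 for all j; (ii) L belongs to 𝒩* ∪ 𝒩†. -/

import Mathlib

/-- A function `φ : ℝ → ℂ` satisfies the KdV spectral ODE with parameter `lam` on `[0, L]`:
it is three times continuously differentiable and `lam·φ + φ' + φ''' = 0` on `[0, L]`. -/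
def KdVSpectralODE (lam : ℂ) (L : ℝ) (φ : ℝ → ℂ) : Prop :=
  ContDiff ℝ 3 φ ∧
    ∀ x ∈ Set.Icc (0 : ℝ) L, lam * φ x + deriv φ x + iteratedDeriv 3 φ x = 0

/-- The critical set 𝒩* of Glass and Guerrero. -/
def criticalNStar : Set ℝ :=
  {L : ℝ | 0 < L ∧ ∃ a b : ℂ,
    a * Complex.exp a = b * Complex.exp b ∧
    b * Complex.exp b = -(a + b) * Complex.exp (-(a + b)) ∧
    (L : ℂ) ^ 2 = -(a ^ 2 + a * b + b ^ 2)}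

/-- The new critical set 𝒩†. -/
def criticalNDagger : Set ℝ :=
  {L : ℝ | 0 < L ∧ ∃ a b : ℂ,
    a ^ 2 * Complex.exp a = b ^ 2 * Complex.exp b ∧
    b ^ 2 * Complex.exp b = (a + b) ^ 2 * Complex.exp (-(a + b)) ∧
    (L : ℂ) ^ 2 = -(a ^ 2 + a * b + b ^ 2)}


/-!
If `μ³ + μ + λ = 0`, the operator `λ + D + D³` factors as `(D - μ)(D² + μD + 1 + μ²)`, so
`θ_μ = ψ'' + μψ' + (1 + μ²)ψ` equals `θ_μ(0) e^{μx}`. For an eigenfunction with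
`ψ(L) = ψ''(L) = 0` this gives `μ ψ'(L) = θ_μ(0) e^{μL}` at each root `μᵢ` of `μ³ + μ + λ`. When
`ψ(0) = ψ'(0) = 0` one has `θ_μ(0) = ψ''(0)`, and when `ψ'(0) = ψ''(0) = 0` one has
`μ θ_μ(0) = -λ ψ(0)`; in both cases `μᵢ ^ k e^{-μᵢ L}` (`k = 1`, resp. `2`) is independent of `i`,
which is the condition defining `𝒩*`, resp. `𝒩†`. Conversely, for such `L` the roots are distinct
and a suitable combination of the `e^{μᵢ x}` is an eigenfunction.

On the star graph, either all `φⱼ''(0)` are equal, and then they vanish since they sum to `0`, or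
two edges have different `φⱼ''(0)`, and their difference vanishes at the central node together
with its first derivative. So the problem on the graph is equivalent to one of these two problems
on a single edge.
-/

open Set Complex

theorem ContDiff.hasDerivAt_iteratedDeriv {𝕜 F : Type*} [NontriviallyNormedField 𝕜]
    [NormedAddCommGroup F] [NormedSpace 𝕜 F] {f : 𝕜 → F} {n : WithTop ℕ∞} (hf : ContDiff 𝕜 n f)
    {m : ℕ} (hm : m < n) (x : 𝕜) :
    HasDerivAt (iteratedDeriv m f) (iteratedDeriv (m + 1) f x) x := by
  rw [iteratedDeriv_succ]
  exact (hf.differentiable_iteratedDeriv m hm x).hasDerivAt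

theorem iteratedDeriv_eq_zero_of_eqOn_zero {F : Type*} [NormedAddCommGroup F] [NormedSpace ℝ F]
    {f : ℝ → F} {a b x : ℝ} {n : ℕ} (hab : a < b) (hf : ContDiff ℝ n f) (h : EqOn f 0 (Icc a b))
    (hx : x ∈ Icc a b) : iteratedDeriv n f x = 0 := by
  rw [← iteratedDerivWithin_eq_iteratedDeriv (uniqueDiffOn_Icc hab) hf.contDiffAt hx,
    iteratedDerivWithin_congr h hx, iteratedDerivWithin_const_zero]

theorem hasDerivAt_cexp_mul_ofReal (μ : ℂ) (x : ℝ) :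
    HasDerivAt (fun t : ℝ => cexp (μ * t)) (μ * cexp (μ * x)) x := by
  simpa [mul_comm] using ((hasDerivAt_id x).ofReal_comp.const_mul μ).cexp

theorem eq_mul_cexp_of_hasDerivAt {f : ℝ → ℂ} {L : ℝ} (r : ℂ)
    (hf : ∀ x ∈ Icc 0 L, HasDerivAt f (r * f x) x) :
    ∀ x ∈ Icc 0 L, f x = f 0 * cexp (r * x) := by
  have hg : ∀ x ∈ Icc 0 L, HasDerivAt (fun t => f t * cexp (-r * t)) 0 x := fun x hx =>
    ((hf x hx).mul (hasDerivAt_cexp_mul_ofReal (-r) x)).congr_deriv (by ring)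
  have hconst := constant_of_has_deriv_right_zero
    (fun x hx => (hg x hx).continuousAt.continuousWithinAt)
    (fun x hx => (hg x (Ico_subset_Icc_self hx)).hasDerivWithinAt)
  intro x hx
  have hx' : f x * cexp (-r * x) = f 0 := by simpa using hconst x hx
  rw [← hx', mul_assoc, ← Complex.exp_add, neg_mul, neg_add_cancel, Complex.exp_zero, mul_one]

theorem exists_vieta_roots (lam : ℂ) : ∃ μ₁ μ₂ μ₃ : ℂ, μ₁ + μ₂ + μ₃ = 0 ∧
    μ₁ * μ₂ + μ₂ * μ₃ + μ₃ * μ₁ = 1 ∧ lam = -(μ₁ * μ₂ * μ₃) := by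
  have hdeg : (Polynomial.X ^ 3 + Polynomial.X + Polynomial.C lam).degree = 3 := by
    compute_degree!
  obtain ⟨μ, hμ⟩ := Complex.exists_root (by rw [hdeg]; norm_num)
  replace hμ : μ ^ 3 + μ + lam = 0 := by simpa using hμ
  obtain ⟨δ, hδ⟩ := IsAlgClosed.exists_pow_nat_eq (-3 * μ ^ 2 - 4) two_pos
  exact ⟨μ, (-μ + δ) / 2, (-μ - δ) / 2, by ring, by linear_combination (-1 / 4 : ℂ) * hδ,
    by linear_combination hμ - (μ / 4) * hδ⟩

theorem cubic_roots_of_vieta {μ₁ μ₂ μ₃ lam : ℂ} (hs : μ₁ + μ₂ + μ₃ = 0)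
    (hp : μ₁ * μ₂ + μ₂ * μ₃ + μ₃ * μ₁ = 1) (hlam : lam = -(μ₁ * μ₂ * μ₃)) :
    μ₁ ^ 3 + μ₁ + lam = 0 ∧ μ₂ ^ 3 + μ₂ + lam = 0 ∧ μ₃ ^ 3 + μ₃ + lam = 0 :=
  ⟨by linear_combination μ₁ ^ 2 * hs - μ₁ * hp + hlam,
    by linear_combination μ₂ ^ 2 * hs - μ₂ * hp + hlam,
    by linear_combination μ₃ ^ 2 * hs - μ₃ * hp + hlam⟩

namespace KdVSpectralODE

variable {lam : ℂ} {L : ℝ} {ψ : ℝ → ℂ}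

theorem hasDerivAt (h : KdVSpectralODE lam L ψ) (x : ℝ) : HasDerivAt ψ (deriv ψ x) x := by
  simpa using h.1.hasDerivAt_iteratedDeriv (m := 0) (by norm_num) x

theorem hasDerivAt_deriv (h : KdVSpectralODE lam L ψ) (x : ℝ) :
    HasDerivAt (deriv ψ) (iteratedDeriv 2 ψ x) x := by
  simpa using h.1.hasDerivAt_iteratedDeriv (m := 1) (by norm_num) x

theorem smul (h : KdVSpectralODE lam L ψ) (c : ℂ) : KdVSpectralODE lam L (c • ψ) := by
  refine ⟨h.1.const_smul c, fun x hx => ?_⟩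
  simp only [Pi.smul_apply, deriv_const_smul_field, iteratedDeriv_const_smul_field, smul_eq_mul]
  linear_combination c * h.2 x hx

theorem iteratedDeriv_sub {φ : ℝ → ℂ} (h : KdVSpectralODE lam L ψ)
    (hφ : KdVSpectralODE lam L φ) {n : ℕ} (hn : n ≤ 3) (x : ℝ) :
    iteratedDeriv n (ψ - φ) x = iteratedDeriv n ψ x - iteratedDeriv n φ x :=
  _root_.iteratedDeriv_sub (h.1.contDiffAt.of_le (by exact_mod_cast hn))
    (hφ.1.contDiffAt.of_le (by exact_mod_cast hn))

theorem sub {φ : ℝ → ℂ} (h : KdVSpectralODE lam L ψ) (hφ : KdVSpectralODE lam L φ) :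
    KdVSpectralODE lam L (ψ - φ) := by
  refine ⟨h.1.sub hφ.1, fun x hx => ?_⟩
  rw [← iteratedDeriv_one, h.iteratedDeriv_sub hφ (by norm_num), h.iteratedDeriv_sub hφ le_rfl,
    iteratedDeriv_one, iteratedDeriv_one, Pi.sub_apply]
  linear_combination h.2 x hx - hφ.2 x hx

end KdVSpectralODE

noncomputable def kdvTheta (μ : ℂ) (ψ : ℝ → ℂ) (x : ℝ) : ℂ :=
  iteratedDeriv 2 ψ x + μ * deriv ψ x + (1 + μ ^ 2) * ψ x

section Factorization

variable {lam μ : ℂ} {L : ℝ} {ψ : ℝ → ℂ}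

theorem hasDerivAt_kdvTheta (h : KdVSpectralODE lam L ψ) (hμ : μ ^ 3 + μ + lam = 0) {x : ℝ}
    (hx : x ∈ Icc 0 L) : HasDerivAt (kdvTheta μ ψ) (μ * kdvTheta μ ψ x) x := by
  have h2 : HasDerivAt (iteratedDeriv 2 ψ) (iteratedDeriv 3 ψ x) x :=
    h.1.hasDerivAt_iteratedDeriv (m := 2) (by norm_num) x
  refine ((h2.add ((h.hasDerivAt_deriv x).const_mul μ)).add
    ((h.hasDerivAt x).const_mul (1 + μ ^ 2))).congr_deriv ?_
  simp only [kdvTheta]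
  linear_combination h.2 x hx - ψ x * hμ

theorem kdvTheta_eq (h : KdVSpectralODE lam L ψ) (hμ : μ ^ 3 + μ + lam = 0) :
    ∀ x ∈ Icc 0 L, kdvTheta μ ψ x = kdvTheta μ ψ 0 * cexp (μ * x) :=
  eq_mul_cexp_of_hasDerivAt μ fun _ hx => hasDerivAt_kdvTheta h hμ hx

theorem mul_deriv_eq_kdvTheta_mul_cexp (h : KdVSpectralODE lam L ψ) (hμ : μ ^ 3 + μ + lam = 0)
    (hL : 0 ≤ L) (hψL : ψ L = 0) (h2L : iteratedDeriv 2 ψ L = 0) :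
    μ * deriv ψ L = kdvTheta μ ψ 0 * cexp (μ * L) := by
  rw [← kdvTheta_eq h hμ L ⟨hL, le_rfl⟩, kdvTheta, hψL, h2L]
  ring

end Factorization

theorem KdVSpectralODE.eqOn_zero {lam : ℂ} {L : ℝ} {ψ : ℝ → ℂ} (h : KdVSpectralODE lam L ψ)
    (h0 : ψ 0 = 0) (h1 : deriv ψ 0 = 0) (h2 : iteratedDeriv 2 ψ 0 = 0) :
    EqOn ψ 0 (Icc 0 L) := by
  obtain ⟨μ, ν, ρ, hs, hp, hlam⟩ := exists_vieta_roots lam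
  have hθ : ∀ x ∈ Icc 0 L, iteratedDeriv 2 ψ x + μ * deriv ψ x + (1 + μ ^ 2) * ψ x = 0 :=
    fun x hx => by
      simpa [kdvTheta, h0, h1, h2] using kdvTheta_eq h (cubic_roots_of_vieta hs hp hlam).1 x hx
  -- `D² + μD + 1 + μ² = (D - ν)(D - ρ)`
  have hχ : ∀ x ∈ Icc 0 L,
      HasDerivAt (fun t => deriv ψ t - ρ * ψ t) (ν * (deriv ψ x - ρ * ψ x)) x := fun x hx =>
    ((h.hasDerivAt_deriv x).sub ((h.hasDerivAt x).const_mul ρ)).congr_deriv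
      (by linear_combination hθ x hx - (deriv ψ x + μ * ψ x) * hs + ψ x * hp)
  have hψ : ∀ x ∈ Icc 0 L, HasDerivAt ψ (ρ * ψ x) x := fun x hx => by
    have hχx := eq_mul_cexp_of_hasDerivAt ν hχ x hx
    simp only [h0, h1, mul_zero, sub_zero, zero_mul] at hχx
    exact (h.hasDerivAt x).congr_deriv (by linear_combination hχx)
  intro x hx
  simpa [h0] using eq_mul_cexp_of_hasDerivAt ρ hψ x hx

/-- The first two conditions say that `μ₁, μ₂, μ₃` are the roots of `μ³ + μ - μ₁μ₂μ₃`. In the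
variables `a = -μ₁ L`, `b = -μ₂ L` this is the condition defining `𝒩*` for `k = 1` and `𝒩†` for
`k = 2`. -/
def IsCriticalTriple (k : ℕ) (L : ℝ) (μ₁ μ₂ μ₃ : ℂ) : Prop :=
  μ₁ + μ₂ + μ₃ = 0 ∧ μ₁ * μ₂ + μ₂ * μ₃ + μ₃ * μ₁ = 1 ∧
    μ₁ ^ k * cexp (-(μ₁ * L)) = μ₂ ^ k * cexp (-(μ₂ * L)) ∧
    μ₂ ^ k * cexp (-(μ₂ * L)) = μ₃ ^ k * cexp (-(μ₃ * L))

theorem exists_isCriticalTriple_iff (k : ℕ) {L : ℝ} (hL : L ≠ 0) :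
    (∃ a b : ℂ, a ^ k * cexp a = b ^ k * cexp b ∧
      b ^ k * cexp b = (-(a + b)) ^ k * cexp (-(a + b)) ∧
      (L : ℂ) ^ 2 = -(a ^ 2 + a * b + b ^ 2)) ↔
    ∃ μ₁ μ₂ μ₃, IsCriticalTriple k L μ₁ μ₂ μ₃ := by
  have hL' : (L : ℂ) ≠ 0 := ofReal_ne_zero.2 hL
  have hscale : ∀ μ : ℂ,
      (-(μ * L)) ^ k * cexp (-(μ * L)) = (-L) ^ k * (μ ^ k * cexp (-(μ * L))) := fun μ => by ring
  have hLk : ((-L : ℂ)) ^ k ≠ 0 := pow_ne_zero k (neg_ne_zero.2 hL')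
  constructor
  · rintro ⟨a, b, h1, h2, hq⟩
    obtain ⟨μ₁, rfl⟩ : ∃ μ₁ : ℂ, a = -(μ₁ * L) := ⟨-a / L, by field_simp⟩
    obtain ⟨μ₂, rfl⟩ : ∃ μ₂ : ℂ, b = -(μ₂ * L) := ⟨-b / L, by field_simp⟩
    rw [show -(-(μ₁ * L) + -(μ₂ * L)) = -(-(μ₁ + μ₂) * L) by ring] at h2
    rw [hscale, hscale] at h1 h2
    refine ⟨μ₁, μ₂, -(μ₁ + μ₂), by ring, ?_, mul_left_cancel₀ hLk h1, mul_left_cancel₀ hLk h2⟩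
    exact mul_left_cancel₀ (pow_ne_zero 2 hL') (by linear_combination -hq)
  · rintro ⟨μ₁, μ₂, μ₃, hs, hp, h1, h2⟩
    refine ⟨-(μ₁ * L), -(μ₂ * L), by rw [hscale, hscale, h1], ?_, ?_⟩
    · rw [show -(-(μ₁ * L) + -(μ₂ * L)) = -(μ₃ * L) by linear_combination (L : ℂ) * hs,
        hscale, hscale, h2]
    · linear_combination (-(L : ℂ) ^ 2) * hp + ((L : ℂ) ^ 2 * (μ₁ + μ₂)) * hs

theorem mem_criticalNStar_iff {L : ℝ} :
    L ∈ criticalNStar ↔ 0 < L ∧ ∃ μ₁ μ₂ μ₃, IsCriticalTriple 1 L μ₁ μ₂ μ₃ :=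
  and_congr_right fun hL => by simpa only [pow_one] using exists_isCriticalTriple_iff 1 hL.ne'

theorem mem_criticalNDagger_iff {L : ℝ} :
    L ∈ criticalNDagger ↔ 0 < L ∧ ∃ μ₁ μ₂ μ₃, IsCriticalTriple 2 L μ₁ μ₂ μ₃ :=
  and_congr_right fun hL => by simpa only [neg_sq] using exists_isCriticalTriple_iff 2 hL.ne'

theorem isCriticalTriple_of_forall_root {k : ℕ} {L : ℝ} {μ₁ μ₂ μ₃ lam v C : ℂ}
    (hs : μ₁ + μ₂ + μ₃ = 0) (hp : μ₁ * μ₂ + μ₂ * μ₃ + μ₃ * μ₁ = 1) (hlam : lam = -(μ₁ * μ₂ * μ₃))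
    (hv : v ≠ 0) (hrel : ∀ μ : ℂ, μ ^ 3 + μ + lam = 0 → μ ^ k * v = C * cexp (μ * L)) :
    IsCriticalTriple k L μ₁ μ₂ μ₃ := by
  have key : ∀ μ : ℂ, μ ^ 3 + μ + lam = 0 → μ ^ k * cexp (-(μ * L)) * v = C := fun μ hμ => by
    rw [mul_right_comm, hrel μ hμ, mul_assoc, ← Complex.exp_add, add_neg_cancel,
      Complex.exp_zero, mul_one]
  obtain ⟨h₁, h₂, h₃⟩ := cubic_roots_of_vieta hs hp hlam
  exact ⟨hs, hp, mul_right_cancel₀ hv ((key _ h₁).trans (key _ h₂).symm),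
    mul_right_cancel₀ hv ((key _ h₂).trans (key _ h₃).symm)⟩

def HasEigenfunction (n : ℕ) (L : ℝ) : Prop :=
  ∃ lam : ℂ, ∃ ψ : ℝ → ℂ, KdVSpectralODE lam L ψ ∧ iteratedDeriv n ψ 0 = 0 ∧ deriv ψ 0 = 0 ∧
    ψ L = 0 ∧ iteratedDeriv 2 ψ L = 0 ∧ ∃ x ∈ Icc 0 L, ψ x ≠ 0

namespace HasEigenfunction

variable {L : ℝ}

theorem mem_criticalNStar (hL : 0 < L) (h : HasEigenfunction 0 L) : L ∈ criticalNStar := by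
  obtain ⟨lam, ψ, hψ, h0, h1, hψL, h2L, x₀, hx₀, hne⟩ := h
  rw [iteratedDeriv_zero] at h0
  obtain ⟨μ₁, μ₂, μ₃, hs, hp, hlam⟩ := exists_vieta_roots lam
  have hrel : ∀ μ : ℂ, μ ^ 3 + μ + lam = 0 →
      μ ^ 1 * deriv ψ L = iteratedDeriv 2 ψ 0 * cexp (μ * L) := fun μ hμ => by
    simpa [kdvTheta, h0, h1] using mul_deriv_eq_kdvTheta_mul_cexp hψ hμ hL.le hψL h2L
  have hw : iteratedDeriv 2 ψ 0 ≠ 0 := fun hw => hne (hψ.eqOn_zero h0 h1 hw hx₀)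
  have hv : deriv ψ L ≠ 0 := fun hv => by
    simpa [hv, hw] using hrel μ₁ (cubic_roots_of_vieta hs hp hlam).1
  exact mem_criticalNStar_iff.2 ⟨hL, μ₁, μ₂, μ₃, isCriticalTriple_of_forall_root hs hp hlam hv hrel⟩

theorem mem_criticalNDagger (hL : 0 < L) (h : HasEigenfunction 2 L) : L ∈ criticalNDagger := by
  obtain ⟨lam, ψ, hψ, h2, h1, hψL, h2L, x₀, hx₀, hne⟩ := h
  obtain ⟨μ₁, μ₂, μ₃, hs, hp, hlam⟩ := exists_vieta_roots lam
  have hrel₀ : ∀ μ : ℂ, μ ^ 3 + μ + lam = 0 →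
      μ * deriv ψ L = (1 + μ ^ 2) * ψ 0 * cexp (μ * L) := fun μ hμ => by
    simpa [kdvTheta, h2, h1] using mul_deriv_eq_kdvTheta_mul_cexp hψ hμ hL.le hψL h2L
  -- `μ (1 + μ²) = -λ` is the same for every root
  have hrel : ∀ μ : ℂ, μ ^ 3 + μ + lam = 0 →
      μ ^ 2 * deriv ψ L = -lam * ψ 0 * cexp (μ * L) := fun μ hμ => by
    linear_combination μ * hrel₀ μ hμ + ψ 0 * cexp (μ * L) * hμ
  have hu : ψ 0 ≠ 0 := fun hu => hne (hψ.eqOn_zero hu h1 h2 hx₀)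
  have hv : deriv ψ L ≠ 0 := by
    intro hv
    have hq : ∀ μ : ℂ, μ ^ 3 + μ + lam = 0 → 1 + μ ^ 2 = 0 := fun μ hμ =>
      (mul_eq_zero.1 (by linear_combination -hrel₀ μ hμ + μ * hv :
        (1 + μ ^ 2) * (ψ 0 * cexp (μ * L)) = 0)).resolve_right
        (mul_ne_zero hu (Complex.exp_ne_zero _))
    obtain ⟨r₁, r₂, r₃⟩ := cubic_roots_of_vieta hs hp hlam
    exact one_ne_zero (by linear_combination hq μ₁ r₁ + hq μ₂ r₂ + hq μ₃ r₃
      - (μ₁ + μ₂ + μ₃) * hs + 2 * hp : (1 : ℂ) = 0)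
  exact mem_criticalNDagger_iff.2
    ⟨hL, μ₁, μ₂, μ₃, isCriticalTriple_of_forall_root hs hp hlam hv hrel⟩

end HasEigenfunction

noncomputable def expSum {ι : Type*} [Fintype ι] (c μ : ι → ℂ) (x : ℝ) : ℂ :=
  ∑ i, c i * cexp (μ i * x)

section ExpSum

variable {ι : Type*} [Fintype ι] (c μ : ι → ℂ)

theorem hasDerivAt_expSum (x : ℝ) : HasDerivAt (expSum c μ) (expSum (c * μ) μ x) x :=
  (HasDerivAt.fun_sum fun i _ => (hasDerivAt_cexp_mul_ofReal (μ i) x).const_mul (c i)).congr_deriv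
    (by simp only [expSum, Pi.mul_apply, mul_assoc])

theorem iteratedDeriv_expSum (n : ℕ) : iteratedDeriv n (expSum c μ) = expSum (c * μ ^ n) μ := by
  induction n generalizing c with
  | zero => simp
  | succ n ih =>
    rw [iteratedDeriv_succ', funext fun x => (hasDerivAt_expSum c μ x).deriv, ih]
    congr 1
    ring

theorem iteratedDeriv_expSum_apply (n : ℕ) (x : ℝ) :
    iteratedDeriv n (expSum c μ) x = ∑ i, c i * μ i ^ n * cexp (μ i * x) := by
  rw [iteratedDeriv_expSum]
  rfl

theorem contDiff_expSum {n : WithTop ℕ∞} : ContDiff ℝ n (expSum c μ) := by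
  have : ContDiff ℝ n ((↑) : ℝ → ℂ) := ofRealCLM.contDiff
  unfold expSum
  fun_prop

theorem kdvSpectralODE_expSum {lam : ℂ} (L : ℝ) (hμ : ∀ i, μ i ^ 3 + μ i + lam = 0) :
    KdVSpectralODE lam L (expSum c μ) := by
  refine ⟨contDiff_expSum c μ, fun x _ => ?_⟩
  rw [← iteratedDeriv_one, iteratedDeriv_expSum_apply, iteratedDeriv_expSum_apply, expSum,
    Finset.mul_sum, ← Finset.sum_add_distrib, ← Finset.sum_add_distrib]
  exact Finset.sum_eq_zero fun i _ => by linear_combination c i * cexp (μ i * x) * hμ i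

end ExpSum

namespace IsCriticalTriple

variable {k : ℕ} {L : ℝ} {μ₁ μ₂ μ₃ : ℂ}

theorem rotate (h : IsCriticalTriple k L μ₁ μ₂ μ₃) : IsCriticalTriple k L μ₂ μ₃ μ₁ :=
  ⟨by linear_combination h.1, by linear_combination h.2.1, h.2.2.2,
    (h.2.2.1.trans h.2.2.2).symm⟩

/-- A double root would be `μ` with `3μ² = -1`, hence purely imaginary, and the relation between
`μ` and `-2μ` would force `|e^{3μL}| = 2^k`. -/
theorem ne (hk : k ≠ 0) (h : IsCriticalTriple k L μ₁ μ₂ μ₃) : μ₁ ≠ μ₂ := by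
  rintro rfl
  obtain ⟨hs, hp, -, h23⟩ := h
  obtain rfl : μ₃ = -(2 * μ₁) := by linear_combination hs
  have hr : 3 * μ₁ ^ 2 = -1 := by linear_combination -hp
  have hre : μ₁.re = 0 := by
    have h1 := congrArg re hr
    have h2 := congrArg im hr
    simp only [sq, mul_re, mul_im, re_ofNat, im_ofNat, neg_re, neg_im, one_re, one_im] at h1 h2
    have : μ₁.re ^ 2 * (3 * μ₁.re ^ 2 + 1) = 0 := by nlinarith
    exact pow_eq_zero_iff two_ne_zero |>.1 ((mul_eq_zero.1 this).resolve_right (by positivity))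
  have hμ : μ₁ ≠ 0 := by rintro rfl; norm_num at hr
  have := congrArg norm h23
  simp only [Complex.norm_mul, norm_pow, norm_exp, neg_re, mul_re, hre, ofReal_re, zero_mul,
    ofReal_im, mul_zero, sub_self, neg_zero, Real.exp_zero, mul_one, neg_mul, neg_neg, norm_neg,
    norm_ofNat, re_ofNat, im_ofNat, mul_im, add_zero] at this
  rw [mul_pow] at this
  have h2k : (2 : ℝ) ^ k = 1 :=
    mul_right_cancel₀ (pow_ne_zero k (norm_ne_zero_iff.2 hμ)) (by linear_combination -this)
  exact (one_lt_pow₀ one_lt_two hk).ne' h2k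

theorem exists_cexp_mul_eq_pow (hk : k ≠ 0) (h : IsCriticalTriple k L μ₁ μ₂ μ₃) :
    ∃ s ≠ 0, cexp (μ₁ * L) * s = μ₁ ^ k ∧ cexp (μ₂ * L) * s = μ₂ ^ k ∧
      cexp (μ₃ * L) * s = μ₃ ^ k := by
  obtain ⟨-, hp, he₁₂, he₂₃⟩ := h
  have hE : ∀ μ : ℂ, cexp (μ * L) * (μ ^ k * cexp (-(μ * L))) = μ ^ k := fun μ => by
    rw [mul_left_comm, ← Complex.exp_add, add_neg_cancel, Complex.exp_zero, mul_one]
  refine ⟨μ₁ ^ k * cexp (-(μ₁ * L)), fun h0 => ?_, hE μ₁, he₁₂ ▸ hE μ₂,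
    he₁₂ ▸ he₂₃ ▸ hE μ₃⟩
  have hz : ∀ μ : ℂ, μ ^ k * cexp (-(μ * L)) = 0 → μ = 0 := fun μ hμ =>
    pow_eq_zero_iff hk |>.1 ((mul_eq_zero.1 hμ).resolve_right (Complex.exp_ne_zero _))
  rw [hz μ₁ h0, hz μ₂ (he₁₂ ▸ h0), hz μ₃ (he₂₃ ▸ he₁₂ ▸ h0)] at hp
  simp at hp

/-- The coefficients are the cross product of `(μᵢ ^ j)` and `(μᵢ ^ (j + 1))`, which gives the
conditions at `0`; at `L` one uses `e^{μᵢ L} = μᵢ ^ (j + 1) / s`, with `s` the common value of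
`μᵢ ^ (j + 1) e^{-μᵢ L}`. -/
theorem exists_eigenfunction {j : ℕ} (hL : 0 < L) (h : IsCriticalTriple (j + 1) L μ₁ μ₂ μ₃) :
    ∃ lam : ℂ, ∃ ψ : ℝ → ℂ, KdVSpectralODE lam L ψ ∧ iteratedDeriv j ψ 0 = 0 ∧
      iteratedDeriv (j + 1) ψ 0 = 0 ∧ ψ L = 0 ∧ iteratedDeriv 2 ψ L = 0 ∧
      ∃ x ∈ Icc 0 L, ψ x ≠ 0 := by
  have h₁₂ := h.ne j.add_one_ne_zero
  have h₂₃ := h.rotate.ne j.add_one_ne_zero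
  have h₃₁ := h.rotate.rotate.ne j.add_one_ne_zero
  obtain ⟨s, hs0, hE₁, hE₂, hE₃⟩ := h.exists_cexp_mul_eq_pow j.add_one_ne_zero
  obtain ⟨hs, hp, -⟩ := h
  have hne : ∀ μ : ℂ, cexp (μ * L) * s = μ ^ (j + 1) → μ ≠ 0 := fun μ hμ h0 => by
    simp [h0, hs0] at hμ
  set c₁ := μ₂ ^ j * μ₃ ^ j * (μ₃ - μ₂)
  set c₂ := μ₃ ^ j * μ₁ ^ j * (μ₁ - μ₃)
  set c₃ := μ₁ ^ j * μ₂ ^ j * (μ₂ - μ₁)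
  set ψ := expSum ![c₁, c₂, c₃] ![μ₁, μ₂, μ₃]
  have hψ : ∀ n x, iteratedDeriv n ψ x =
      c₁ * μ₁ ^ n * cexp (μ₁ * x) + c₂ * μ₂ ^ n * cexp (μ₂ * x) + c₃ * μ₃ ^ n * cexp (μ₃ * x) :=
    fun n x => by simp [ψ, iteratedDeriv_expSum_apply, Fin.sum_univ_three, add_assoc]
  have hψ0 : ∀ n, iteratedDeriv n ψ 0 = c₁ * μ₁ ^ n + c₂ * μ₂ ^ n + c₃ * μ₃ ^ n := fun n => by
    simp [hψ]
  have hψL0 : iteratedDeriv 0 ψ L = 0 := mul_right_cancel₀ hs0 <| by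
    rw [hψ]
    linear_combination c₁ * hE₁ + c₂ * hE₂ + c₃ * hE₃
  have hψL2 : iteratedDeriv 2 ψ L = 0 := mul_right_cancel₀ hs0 <| by
    rw [hψ]
    linear_combination c₁ * μ₁ ^ 2 * hE₁ + c₂ * μ₂ ^ 2 * hE₂ + c₃ * μ₃ ^ 2 * hE₃ +
      (μ₁ * μ₂ * μ₃) ^ j * (μ₁ - μ₂) * (μ₂ - μ₃) * (μ₃ - μ₁) * hs
  obtain ⟨r₁, r₂, r₃⟩ := cubic_roots_of_vieta hs hp rfl
  refine ⟨-(μ₁ * μ₂ * μ₃), ψ,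
    kdvSpectralODE_expSum _ _ L (by simp [Fin.forall_fin_succ, r₁, r₂, r₃]),
    by rw [hψ0]; ring, by rw [hψ0]; ring, by simpa using hψL0, hψL2, ?_⟩
  by_contra! hzero
  have hd : ∀ n, c₁ * μ₁ ^ n + c₂ * μ₂ ^ n + c₃ * μ₃ ^ n = 0 := fun n => by
    rw [← hψ0]
    exact iteratedDeriv_eq_zero_of_eqOn_zero hL (contDiff_expSum _ _) hzero ⟨le_rfl, hL.le⟩
  have hc₁ : c₁ * ((μ₁ - μ₂) * (μ₁ - μ₃)) = 0 := by
    linear_combination hd 2 - (μ₂ + μ₃) * hd 1 + μ₂ * μ₃ * hd 0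
  simp [c₁, hne μ₂ hE₂, hne μ₃ hE₃, sub_eq_zero, h₁₂, h₂₃.symm, h₃₁.symm] at hc₁

end IsCriticalTriple

theorem hasEigenfunction_zero_iff_mem_criticalNStar {L : ℝ} (hL : 0 < L) :
    HasEigenfunction 0 L ↔ L ∈ criticalNStar := by
  refine ⟨HasEigenfunction.mem_criticalNStar hL, fun h => ?_⟩
  obtain ⟨-, μ₁, μ₂, μ₃, hμ⟩ := mem_criticalNStar_iff.1 h
  obtain ⟨lam, ψ, hψ, h0, h1, hne⟩ := hμ.exists_eigenfunction (j := 0) hL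
  exact ⟨lam, ψ, hψ, h0, by simpa using h1, hne⟩

theorem hasEigenfunction_two_iff_mem_criticalNDagger {L : ℝ} (hL : 0 < L) :
    HasEigenfunction 2 L ↔ L ∈ criticalNDagger := by
  refine ⟨HasEigenfunction.mem_criticalNDagger hL, fun h => ?_⟩
  obtain ⟨-, μ₁, μ₂, μ₃, hμ⟩ := mem_criticalNDagger_iff.1 h
  obtain ⟨lam, ψ, hψ, h1, h2, hne⟩ := hμ.exists_eigenfunction (j := 1) hL
  exact ⟨lam, ψ, hψ, h2, by simpa using h1, hne⟩

/-- Eigenfunctions of the star graph with edges `ι` of length `L` and central node at `x = 0`. -/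
def HasStarGraphEigenfunction {ι : Type*} [Fintype ι] (z : ι) (L : ℝ) : Prop :=
  ∃ lam : ℂ, ∃ φ : ι → ℝ → ℂ,
    (∀ j, KdVSpectralODE lam L (φ j)) ∧
    (∀ j, φ j 0 = φ z 0) ∧
    (∑ j, iteratedDeriv 2 (φ j) 0) = 0 ∧
    (∀ j, φ j L = 0) ∧
    (∀ j, deriv (φ j) 0 = 0) ∧
    (∀ j, iteratedDeriv 2 (φ j) L = 0) ∧
    (∃ j, ∃ x ∈ Icc 0 L, φ j x ≠ 0)

namespace HasStarGraphEigenfunction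

variable {ι : Type*} [Fintype ι] (z : ι) {L : ℝ}

theorem hasEigenfunction (hL : 0 < L) (h : HasStarGraphEigenfunction z L) :
    HasEigenfunction 0 L ∨ HasEigenfunction 2 L := by
  obtain ⟨lam, φ, hφ, hz, hsum, hφL, h1, h2L, j₀, x₀, hx₀, hne⟩ := h
  by_cases hall : ∀ j, iteratedDeriv 2 (φ j) 0 = iteratedDeriv 2 (φ z) 0
  · have hcard : (Fintype.card ι : ℂ) * iteratedDeriv 2 (φ z) 0 = 0 := by
      rw [← hsum, Finset.sum_congr rfl fun j _ => hall j, Finset.sum_const, Finset.card_univ,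
        nsmul_eq_mul]
    have h20 : iteratedDeriv 2 (φ z) 0 = 0 :=
      (mul_eq_zero.1 hcard).resolve_left (Nat.cast_ne_zero.2 (Fintype.card_pos_iff.2 ⟨z⟩).ne')
    exact Or.inr ⟨lam, φ j₀, hφ j₀, (hall j₀).trans h20, h1 j₀, hφL j₀, h2L j₀, x₀, hx₀, hne⟩
  · push Not at hall
    obtain ⟨k, hk⟩ := hall
    refine Or.inl ⟨lam, φ k - φ z, (hφ k).sub (hφ z), by simp [hz k], ?_, by simp [hφL], ?_, ?_⟩
    · rw [← iteratedDeriv_one, (hφ k).iteratedDeriv_sub (hφ z) (by norm_num), iteratedDeriv_one,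
        iteratedDeriv_one, h1, h1, sub_self]
    · rw [(hφ k).iteratedDeriv_sub (hφ z) (by norm_num), h2L, h2L, sub_self]
    · by_contra! hzero
      refine hk (sub_eq_zero.1 ?_)
      rw [← (hφ k).iteratedDeriv_sub (hφ z) (n := 2) (by norm_num)]
      exact iteratedDeriv_eq_zero_of_eqOn_zero hL (((hφ k).1.sub (hφ z).1).of_le (by norm_num))
        hzero (left_mem_Icc.2 hL.le)

theorem of_hasEigenfunction_zero [Nontrivial ι] (h : HasEigenfunction 0 L) :
    HasStarGraphEigenfunction z L := by
  classical
  obtain ⟨lam, ψ, hψ, h0, h1, hψL, h2L, x₀, hx₀, hne⟩ := h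
  rw [iteratedDeriv_zero] at h0
  obtain ⟨o, hoz⟩ := exists_ne z
  set c : ι → ℂ := Pi.single z 1 - Pi.single o 1
  refine ⟨lam, fun j => c j • ψ, fun j => hψ.smul (c j), by simp [h0], ?_, by simp [hψL],
    by simp [deriv_const_smul_field, h1], by simp [h2L], z, x₀, hx₀, ?_⟩
  · simp [c, ← Finset.sum_mul, Finset.sum_sub_distrib]
  · simp only [c, Pi.smul_apply, Pi.sub_apply, smul_eq_mul]
    rwa [Pi.single_eq_same, Pi.single_eq_of_ne hoz.symm, sub_zero, one_mul]

theorem of_hasEigenfunction_two (h : HasEigenfunction 2 L) : HasStarGraphEigenfunction z L := by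
  obtain ⟨lam, ψ, hψ, h2, h1, hψL, h2L, hne⟩ := h
  exact ⟨lam, fun _ => ψ, fun _ => hψ, fun _ => rfl, by simp [h2], fun _ => hψL, fun _ => h1,
    fun _ => h2L, z, hne⟩

theorem iff_hasEigenfunction_zero_or_two [Nontrivial ι] (hL : 0 < L) :
    HasStarGraphEigenfunction z L ↔ HasEigenfunction 0 L ∨ HasEigenfunction 2 L :=
  ⟨hasEigenfunction z hL, fun h => h.elim (of_hasEigenfunction_zero z) (of_hasEigenfunction_two z)⟩

end HasStarGraphEigenfunction

theorem stmt9 (N : ℕ) (hN : 2 ≤ N) (L : ℝ) (hL : 0 < L) :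
    (∃ lam : ℂ, ∃ φ : Fin N → ℝ → ℂ,
      (∀ j, KdVSpectralODE lam L (φ j)) ∧
      (∀ j, φ j 0 = φ ⟨0, by omega⟩ 0) ∧
      (∑ j, iteratedDeriv 2 (φ j) 0) = 0 ∧
      (∀ j, φ j L = 0) ∧
      (∀ j, deriv (φ j) 0 = 0) ∧
      (∀ j, iteratedDeriv 2 (φ j) L = 0) ∧
      (∃ j, ∃ x ∈ Set.Icc (0 : ℝ) L, φ j x ≠ 0)) ↔
    L ∈ criticalNStar ∪ criticalNDagger := by
  have : Nontrivial (Fin N) := Fin.nontrivial_iff_two_le.2 hN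
  exact (HasStarGraphEigenfunction.iff_hasEigenfunction_zero_or_two _ hL).trans
    (or_congr (hasEigenfunction_zero_iff_mem_criticalNStar hL)
      (hasEigenfunction_two_iff_mem_criticalNDagger hL))
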